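/- Under assumptions (i)–(iii), the optimal Q-function is Lipschitz in the mean-field parameter: for all s, s' ∈ S, ‖Q_s − Q_{s'}‖∞ ≤ L · ‖s − s'‖, where L = ((1 − α) L_r + α R_max |X| L_p) / (1 − α)². -/

import Mathlib

/-! The Q-functions are uniformly bounded by `R_max / (1 - α)`: a fixed point satisfies
`‖Q‖ ≤ R_max + α ‖Q‖`. Subtracting the fixed-point equations for `s` and `s'` and splitting
`p_s V_s - p_{s'} V_{s'} = p_s (V_s - V_{s'}) + (p_s - p_{s'}) V_{s'}` gives
`‖Q_s - Q_{s'}‖ ≤ L_r ε + α ‖Q_s - Q_{s'}‖ + α |X| L_p ε R_max / (1 - α)` with `ε = ‖s - s'‖`,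
and solving for `‖Q_s - Q_{s'}‖` yields the Lipschitz constant. -/

open Finset

/-- The Bellman optimality operator
`(T Q)(x,a) = r(x,a) + α * Σ_{x'} p(x'|x,a) * max_{a'} Q(x',a')`. -/
noncomputable def bellmanOp {X A : Type*} [Fintype X] [Fintype A] [Nonempty A]
    (r : X × A → ℝ) (p : X × A → X → ℝ) (α : ℝ) (Q : X × A → ℝ) : X × A → ℝ :=
  fun xa => r xa + α * ∑ x' : X, p xa x' *
    Finset.univ.sup' Finset.univ_nonempty (fun a' : A => Q (x', a'))

/-- The sup norm `‖Q‖∞ = max_{(x,a)} |Q(x,a)|`. -/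
noncomputable def supNorm {X A : Type*} [Fintype X] [Fintype A] [Nonempty X] [Nonempty A]
    (Q : X × A → ℝ) : ℝ :=
  Finset.univ.sup' Finset.univ_nonempty (fun xa : X × A => |Q xa|)

theorem Finset.abs_sup'_sub_sup'_le {ι : Type*} {s : Finset ι} (hs : s.Nonempty)
    {f g : ι → ℝ} {c : ℝ} (h : ∀ i ∈ s, |f i - g i| ≤ c) :
    |s.sup' hs f - s.sup' hs g| ≤ c := by
  rw [abs_sub_le_iff, sub_le_iff_le_add, sub_le_iff_le_add]
  constructor
  · refine Finset.sup'_le _ _ fun i hi => ?_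
    linarith [(abs_le.mp (h i hi)).2, Finset.le_sup' g hi]
  · refine Finset.sup'_le _ _ fun i hi => ?_
    linarith [(abs_le.mp (h i hi)).1, Finset.le_sup' f hi]

theorem Finset.abs_sup'_le {ι : Type*} {s : Finset ι} (hs : s.Nonempty)
    {f : ι → ℝ} {c : ℝ} (h : ∀ i ∈ s, |f i| ≤ c) : |s.sup' hs f| ≤ c := by
  simpa [Finset.sup'_const] using
    Finset.abs_sup'_sub_sup'_le hs (g := fun _ => 0) (by simpa using h)

section WeightedSum

variable {ι : Type*} [Fintype ι] {w w' f g : ι → ℝ} {c δ M : ℝ}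

theorem abs_sum_mul_le_of_sum_eq_one (hw0 : ∀ i, 0 ≤ w i) (hw1 : ∑ i, w i = 1)
    (hf : ∀ i, |f i| ≤ c) : |∑ i, w i * f i| ≤ c :=
  calc |∑ i, w i * f i| ≤ ∑ i, |w i * f i| := abs_sum_le_sum_abs _ _
    _ ≤ ∑ i, w i * c := by
        refine sum_le_sum fun i _ => ?_
        rw [abs_mul, abs_of_nonneg (hw0 i)]
        exact mul_le_mul_of_nonneg_left (hf i) (hw0 i)
    _ = c := by rw [← sum_mul, hw1, one_mul]

theorem abs_sum_mul_sub_sum_mul_le (hw0 : ∀ i, 0 ≤ w i) (hw1 : ∑ i, w i = 1)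
    (hfg : ∀ i, |f i - g i| ≤ c) (hww' : ∀ i, |w i - w' i| ≤ δ) (hg : ∀ i, |g i| ≤ M) :
    |∑ i, w i * f i - ∑ i, w' i * g i| ≤ c + Fintype.card ι * δ * M := by
  have hsplit : ∑ i, w i * f i - ∑ i, w' i * g i =
      ∑ i, w i * (f i - g i) + ∑ i, (w i - w' i) * g i := by
    rw [← sum_sub_distrib, ← sum_add_distrib]
    exact sum_congr rfl fun i _ => by ring
  have hperturb : |∑ i, (w i - w' i) * g i| ≤ Fintype.card ι * δ * M :=
    calc |∑ i, (w i - w' i) * g i| ≤ ∑ i, |(w i - w' i) * g i| := abs_sum_le_sum_abs _ _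
      _ ≤ ∑ _i : ι, δ * M := by
          refine sum_le_sum fun i _ => ?_
          rw [abs_mul]
          exact mul_le_mul (hww' i) (hg i) (abs_nonneg _) ((abs_nonneg _).trans (hww' i))
      _ = Fintype.card ι * δ * M := by rw [sum_const, card_univ, nsmul_eq_mul, mul_assoc]
  rw [hsplit]
  exact (abs_add_le _ _).trans
    (add_le_add (abs_sum_mul_le_of_sum_eq_one hw0 hw1 hfg) hperturb)

end WeightedSum

section Bellman

variable {X A : Type*} [Fintype X] [Fintype A] [Nonempty A]

noncomputable def greedyValue (Q : X × A → ℝ) (x : X) : ℝ :=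
  univ.sup' univ_nonempty fun a : A => Q (x, a)

theorem bellmanOp_apply (r : X × A → ℝ) (p : X × A → X → ℝ) (α : ℝ) (Q : X × A → ℝ)
    (xa : X × A) :
    bellmanOp r p α Q xa = r xa + α * ∑ x', p xa x' * greedyValue Q x' :=
  rfl

variable [Nonempty X]

theorem abs_le_supNorm (Q : X × A → ℝ) (xa : X × A) : |Q xa| ≤ supNorm Q :=
  le_sup' (fun xa : X × A => |Q xa|) (mem_univ xa)

theorem supNorm_le {Q : X × A → ℝ} {c : ℝ} (h : ∀ xa, |Q xa| ≤ c) : supNorm Q ≤ c :=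
  sup'_le _ _ fun xa _ => h xa

theorem abs_greedyValue_le (Q : X × A → ℝ) (x : X) : |greedyValue Q x| ≤ supNorm Q :=
  abs_sup'_le _ fun a _ => abs_le_supNorm Q (x, a)

theorem abs_greedyValue_sub_le (Q Q' : X × A → ℝ) (x : X) :
    |greedyValue Q x - greedyValue Q' x| ≤ supNorm (Q - Q') :=
  abs_sup'_sub_sup'_le _ fun a _ => abs_le_supNorm (Q - Q') (x, a)

variable {r r' : X × A → ℝ} {p p' : X × A → X → ℝ} {α : ℝ} {Q Q' : X × A → ℝ}

theorem abs_bellmanOp_le {R : ℝ} (hα : 0 ≤ α) (hp0 : ∀ xa x, 0 ≤ p xa x)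
    (hp1 : ∀ xa, ∑ x, p xa x = 1) (hr : ∀ xa, |r xa| ≤ R) (xa : X × A) :
    |bellmanOp r p α Q xa| ≤ R + α * supNorm Q := by
  rw [bellmanOp_apply]
  refine (abs_add_le _ _).trans (add_le_add (hr xa) ?_)
  rw [abs_mul, abs_of_nonneg hα]
  exact mul_le_mul_of_nonneg_left
    (abs_sum_mul_le_of_sum_eq_one (hp0 xa) (hp1 xa) (abs_greedyValue_le Q)) hα

theorem abs_bellmanOp_sub_le {δr δp : ℝ} (hα : 0 ≤ α) (hp0 : ∀ xa x, 0 ≤ p xa x)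
    (hp1 : ∀ xa, ∑ x, p xa x = 1) (hr : ∀ xa, |r xa - r' xa| ≤ δr)
    (hp : ∀ xa x, |p xa x - p' xa x| ≤ δp) (xa : X × A) :
    |bellmanOp r p α Q xa - bellmanOp r' p' α Q' xa| ≤
      δr + α * (supNorm (Q - Q') + Fintype.card X * δp * supNorm Q') := by
  rw [bellmanOp_apply, bellmanOp_apply, add_sub_add_comm, ← mul_sub]
  refine (abs_add_le _ _).trans (add_le_add (hr xa) ?_)
  rw [abs_mul, abs_of_nonneg hα]
  exact mul_le_mul_of_nonneg_left (abs_sum_mul_sub_sum_mul_le (hp0 xa) (hp1 xa)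
    (abs_greedyValue_sub_le Q Q') (hp xa) (abs_greedyValue_le Q')) hα

theorem supNorm_le_of_bellmanOp_eq_self {R : ℝ} (hα0 : 0 ≤ α) (hα1 : α < 1)
    (hp0 : ∀ xa x, 0 ≤ p xa x) (hp1 : ∀ xa, ∑ x, p xa x = 1) (hr : ∀ xa, |r xa| ≤ R)
    (hQ : bellmanOp r p α Q = Q) : supNorm Q ≤ R / (1 - α) := by
  have h : supNorm Q ≤ R + α * supNorm Q :=
    supNorm_le fun xa => by simpa only [hQ] using abs_bellmanOp_le (Q := Q) hα0 hp0 hp1 hr xa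
  rw [le_div_iff₀ (sub_pos.mpr hα1)]
  linarith

theorem supNorm_sub_le_of_bellmanOp_eq_self {δr δp : ℝ} (hα : 0 ≤ α)
    (hp0 : ∀ xa x, 0 ≤ p xa x) (hp1 : ∀ xa, ∑ x, p xa x = 1)
    (hr : ∀ xa, |r xa - r' xa| ≤ δr) (hp : ∀ xa x, |p xa x - p' xa x| ≤ δp)
    (hQ : bellmanOp r p α Q = Q) (hQ' : bellmanOp r' p' α Q' = Q') :
    (1 - α) * supNorm (Q - Q') ≤ δr + α * (Fintype.card X * δp * supNorm Q') := by
  have h : supNorm (Q - Q') ≤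
      δr + α * (supNorm (Q - Q') + Fintype.card X * δp * supNorm Q') :=
    supNorm_le fun xa => by
      simpa only [Pi.sub_apply, hQ, hQ'] using abs_bellmanOp_sub_le (Q := Q) (Q' := Q')
        hα hp0 hp1 hr hp xa
  linarith

end Bellman

theorem q_function_lipschitz_in_mean_field_general
    {X A : Type*} [Fintype X] [Fintype A] [Nonempty X] [Nonempty A]
    {E : Type*} [NormedAddCommGroup E] [NormedSpace ℝ E]
    (S : Set E)
    (α : ℝ) (hα0 : 0 ≤ α) (hα1 : α < 1)
    (r : E → X × A → ℝ) (p : E → X × A → X → ℝ)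
    (hp0 : ∀ s ∈ S, ∀ xa x', 0 ≤ p s xa x')
    (hp1 : ∀ s ∈ S, ∀ xa, ∑ x' : X, p s xa x' = 1)
    (Rmax : ℝ)
    (hR : ∀ s ∈ S, ∀ xa : X × A, |r s xa| ≤ Rmax)
    (Lr : ℝ)
    (hLr : ∀ s ∈ S, ∀ s' ∈ S, ∀ xa : X × A, |r s xa - r s' xa| ≤ Lr * ‖s - s'‖)
    (Lp : ℝ) (hLp0 : 0 ≤ Lp)
    (hLp : ∀ s ∈ S, ∀ s' ∈ S, ∀ xa x', |p s xa x' - p s' xa x'| ≤ Lp * ‖s - s'‖)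
    (Q : E → X × A → ℝ)
    (hQfix : ∀ s ∈ S, bellmanOp (r s) (p s) α (Q s) = Q s) :
    ∀ s ∈ S, ∀ s' ∈ S,
      supNorm (fun xa => Q s xa - Q s' xa) ≤
        ((1 - α) * Lr + α * Rmax * (Fintype.card X) * Lp) / (1 - α) ^ 2 * ‖s - s'‖ := by
  intro s hs s' hs'
  have h1α : 0 < 1 - α := sub_pos.mpr hα1
  have hdiff := supNorm_sub_le_of_bellmanOp_eq_self hα0 (hp0 s hs) (hp1 s hs)
    (hLr s hs s' hs') (hLp s hs s' hs') (hQfix s hs) (hQfix s' hs')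
  have hbound := supNorm_le_of_bellmanOp_eq_self hα0 hα1 (hp0 s' hs') (hp1 s' hs')
    (hR s' hs') (hQfix s' hs')
  calc supNorm (Q s - Q s')
      ≤ (Lr * ‖s - s'‖ + α * (Fintype.card X * (Lp * ‖s - s'‖) * supNorm (Q s'))) / (1 - α) :=
        (le_div_iff₀' h1α).mpr hdiff
    _ ≤ (Lr * ‖s - s'‖ + α * (Fintype.card X * (Lp * ‖s - s'‖) * (Rmax / (1 - α)))) /
          (1 - α) := by gcongr
    _ = ((1 - α) * Lr + α * Rmax * (Fintype.card X) * Lp) / (1 - α) ^ 2 * ‖s - s'‖ := by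
        field_simp

/-- Under assumptions (i)–(iii), the optimal Q-function is Lipschitz in
the mean-field parameter: for all `s, s' ∈ S`, `‖Q_s − Q_{s'}‖∞ ≤ L * ‖s − s'‖`, where
`L = ((1 − α) L_r + α R_max |X| L_p) / (1 − α)²`. -/
theorem q_function_lipschitz_in_mean_field
    {X A : Type*} [Fintype X] [Fintype A] [Nonempty X] [Nonempty A]
    {E : Type*} [NormedAddCommGroup E] [NormedSpace ℝ E]
    (S : Set E) (hS : S.Nonempty)
    (α : ℝ) (hα0 : 0 ≤ α) (hα1 : α < 1)
    (r : E → X × A → ℝ) (p : E → X × A → X → ℝ)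
    (hp0 : ∀ s ∈ S, ∀ xa x', 0 ≤ p s xa x')
    (hp1 : ∀ s ∈ S, ∀ xa, ∑ x' : X, p s xa x' = 1)
    (Rmax : ℝ) (hRmax : 0 ≤ Rmax)
    (hR : ∀ s ∈ S, ∀ xa : X × A, |r s xa| ≤ Rmax)
    (Lr : ℝ) (hLr0 : 0 ≤ Lr)
    (hLr : ∀ s ∈ S, ∀ s' ∈ S, ∀ xa : X × A, |r s xa - r s' xa| ≤ Lr * ‖s - s'‖)
    (Lp : ℝ) (hLp0 : 0 ≤ Lp)
    (hLp : ∀ s ∈ S, ∀ s' ∈ S, ∀ xa x', |p s xa x' - p s' xa x'| ≤ Lp * ‖s - s'‖)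
    (Q : E → X × A → ℝ)
    (hQfix : ∀ s ∈ S, bellmanOp (r s) (p s) α (Q s) = Q s) :
    ∀ s ∈ S, ∀ s' ∈ S,
      supNorm (fun xa => Q s xa - Q s' xa) ≤
        ((1 - α) * Lr + α * Rmax * (Fintype.card X) * Lp) / (1 - α) ^ 2 * ‖s - s'‖ :=
  q_function_lipschitz_in_mean_field_general S α hα0 hα1 r p hp0 hp1 Rmax hR Lr hLr Lp hLp0 hLp Q
    hQfix
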